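/- arXiv:1610.05445 — 2 statements merged into one kernel-verified Lean document; each statement's English description precedes it below -/
import Mathlib

section
/- The Adjacent Hindman Theorem for 2 colors implies the Increasing Polarized Ramsey Theorem for pairs and 2 colors: if for every g : ℕ → Fin 2 there exists an apart strictly increasing sequence h with all adjacent sums monochromatic, then for every f : ℕ → ℕ → Fin 2 there exist infinite sets H₁, H₂ ⊆ ℕ and a color d such that f x₁ x₂ = d for all x₁ ∈ H₁, x₂ ∈ H₂ with x₁ < x₂. -/
/-- λ(n): the 2-adic valuation of n (least exponent in binary expansion). -/
def lam (n : ℕ) : ℕ := padicValNat 2 n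

/-- μ(n): ⌊log₂ n⌋ (greatest exponent in binary expansion). -/
def mu (n : ℕ) : ℕ := Nat.log 2 n

/-- Apartness condition for a sequence. -/
def Apart (h : ℕ → ℕ) : Prop := ∀ i j, i < j → mu (h i) < lam (h j)

/-- Sum of adjacent elements h i + h (i+1) + ... + h j. -/
def adjSum (h : ℕ → ℕ) (i j : ℕ) : ℕ := ∑ t ∈ Finset.Icc i j, h t

/-!
Colour `n` by `f (λ n) (μ n)`. For an apart sequence `h`, the adjacent sum
`h i + ⋯ + h j` has the lowest binary digit of `h i` and the highest binary digit of `h j`,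
so a monochromatic apart sequence makes `f` constant on all pairs `(λ (h i), μ (h j))` with
`i ≤ j`. Apartness also forces `λ (h i) < μ (h j)` to imply `i ≤ j`, so
`H₁ = {λ (h i)}` and `H₂ = {μ (h j)}` work.
-/

lemma lam_le_mu (n : ℕ) : lam n ≤ mu n := padicValNat_le_nat_log n

lemma lam_add_of_lam_lt {a b : ℕ} (ha : a ≠ 0) (hb : b ≠ 0) (hab : lam a < lam b) :
    lam (a + b) = lam a := by
  unfold lam at *
  have key := padicValRat.add_eq_of_lt (p := 2) (q := a) (r := b) (by positivity)
    (by exact_mod_cast ha) (by exact_mod_cast hb) (by simpa [padicValRat.of_nat] using hab)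
  exact_mod_cast key

lemma mu_add_of_mu_lt_lam {a b : ℕ} (hb : b ≠ 0) (hab : mu a < lam b) : mu (a + b) = mu b := by
  unfold mu lam at *
  set k := padicValNat 2 b
  have ha : a < 2 ^ k := Nat.lt_pow_of_log_lt one_lt_two hab
  have hb_lt : b < 2 ^ (Nat.log 2 b + 1) := Nat.lt_pow_succ_log_self one_lt_two b
  -- `b` and `2 ^ (μ b + 1)` are distinct multiples of `2 ^ λ b`, so they differ by at least `2 ^ λ b`
  have hgap : 2 ^ k ≤ 2 ^ (Nat.log 2 b + 1) - b := by
    refine Nat.le_of_dvd (by omega) (Nat.dvd_sub (pow_dvd_pow 2 ?_) pow_padicValNat_dvd)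
    have := padicValNat_le_nat_log (p := 2) b
    omega
  refine Nat.log_eq_of_pow_le_of_lt_pow ?_ (by omega)
  exact (Nat.pow_log_le_self 2 hb).trans (Nat.le_add_left b a)

lemma adjSum_self (h : ℕ → ℕ) (i : ℕ) : adjSum h i i = h i := by
  simp [adjSum]

lemma adjSum_succ {h : ℕ → ℕ} {i j : ℕ} (hij : i ≤ j) :
    adjSum h i (j + 1) = adjSum h i j + h (j + 1) :=
  Finset.sum_Icc_succ_top (by omega) h

lemma adjSum_ne_zero {h : ℕ → ℕ} (hpos : ∀ i, 0 < h i) {i j : ℕ} (hij : i ≤ j) :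
    adjSum h i j ≠ 0 :=
  (Finset.sum_pos (fun t _ => hpos t) ⟨i, Finset.mem_Icc.mpr ⟨le_rfl, hij⟩⟩).ne'

namespace Apart

variable {h : ℕ → ℕ}

lemma strictMono_lam (hap : Apart h) : StrictMono (lam ∘ h) :=
  fun i j hij => (lam_le_mu (h i)).trans_lt (hap i j hij)

lemma strictMono_mu (hap : Apart h) : StrictMono (mu ∘ h) :=
  fun i j hij => (hap i j hij).trans_le (lam_le_mu (h j))

lemma le_of_lam_lt_mu (hap : Apart h) {i j : ℕ} (hlt : lam (h i) < mu (h j)) : i ≤ j :=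
  le_of_not_gt fun hji => (hap j i hji).not_gt hlt

lemma mu_adjSum (hap : Apart h) (hpos : ∀ i, 0 < h i) {i j : ℕ} (hij : i ≤ j) :
    mu (adjSum h i j) = mu (h j) := by
  induction j, hij using Nat.le_induction with
  | base => rw [adjSum_self]
  | succ j hij ih =>
    rw [adjSum_succ hij]
    exact mu_add_of_mu_lt_lam (hpos _).ne' (ih ▸ hap j (j + 1) j.lt_succ_self)

lemma lam_adjSum (hap : Apart h) (hpos : ∀ i, 0 < h i) {i j : ℕ} (hij : i ≤ j) :
    lam (adjSum h i j) = lam (h i) := by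
  induction j, hij using Nat.le_induction with
  | base => rw [adjSum_self]
  | succ j hij ih =>
    rw [adjSum_succ hij, ← ih]
    refine lam_add_of_lam_lt (adjSum_ne_zero hpos hij) (hpos _).ne' ?_
    calc lam (adjSum h i j) ≤ mu (adjSum h i j) := lam_le_mu _
      _ = mu (h j) := hap.mu_adjSum hpos hij
      _ < lam (h (j + 1)) := hap j (j + 1) j.lt_succ_self

end Apart

theorem aht2_implies_ipt22
    (aht : ∀ g : ℕ → Fin 2, ∃ h : ℕ → ℕ, StrictMono h ∧ (∀ i, 0 < h i) ∧ Apart h ∧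
      ∃ d : Fin 2, ∀ i j, i ≤ j → g (adjSum h i j) = d) :
    ∀ f : ℕ → ℕ → Fin 2, ∃ H₁ H₂ : Set ℕ, H₁.Infinite ∧ H₂.Infinite ∧
      ∃ d : Fin 2, ∀ x₁ ∈ H₁, ∀ x₂ ∈ H₂, x₁ < x₂ → f x₁ x₂ = d := by
  intro f
  obtain ⟨h, -, hpos, hap, d, hd⟩ := aht fun n => f (lam n) (mu n)
  refine ⟨Set.range (lam ∘ h), Set.range (mu ∘ h),
    Set.infinite_range_of_injective hap.strictMono_lam.injective,
    Set.infinite_range_of_injective hap.strictMono_mu.injective, d, ?_⟩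
  rintro _ ⟨i, rfl⟩ _ ⟨j, rfl⟩ hlt
  have hij := hap.le_of_lam_lt_mu hlt
  simpa only [Function.comp_apply, hap.lam_adjSum hpos hij, hap.mu_adjSum hpos hij] using hd i j hij
end

section
/- The Adjacent Hindman Theorem holds for all finite colorings: for every k and every c : ℕ → Fin k, there exists a strictly increasing sequence h : ℕ → ℕ of positive naturals satisfying apartness (for all i < j, μ(h i) < λ(h j)) and a color d such that c(h i + h(i+1) + ... + h j) = d for all i ≤ j. -/
/-!
Colour a pair `i < j` by `c (2 ^ j - 2 ^ i)`, the number with binary digits exactly `i, …, j - 1`.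
Ramsey's theorem for pairs gives a strictly increasing `s` on which this colouring is constant,
say `d`. The blocks `h n = 2 ^ s (n + 1) - 2 ^ s n` occupy the consecutive digit ranges
`[s n, s (n + 1))`, so they are apart, and an adjacent sum telescopes:
`h i + ⋯ + h j = 2 ^ s (j + 1) - 2 ^ s i`, which has colour `d`.
-/

open Set

theorem Set.Infinite.exists_infinite_inter_preimage_singleton {α κ : Type*} [Finite κ]
    {A : Set α} (hA : A.Infinite) (g : α → κ) : ∃ e, (A ∩ g ⁻¹' {e}).Infinite := by
  by_contra! h
  exact hA ((finite_iUnion h).subset fun x hx => mem_iUnion.2 ⟨g x, hx, rfl⟩)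

section Ramsey

variable {κ : Type*} [Finite κ]

theorem exists_strictMono_min_homogeneous (f : ℕ → ℕ → κ) :
    ∃ (x : ℕ → ℕ) (e : ℕ → κ), StrictMono x ∧ ∀ m n, m < n → f (x m) (x n) = e m := by
  -- Shrink `A` to an infinite set above `min A` on which `f (min A)` is constant; the minima of
  -- the iterated sets then form the required sequence.
  have step (A : {A : Set ℕ // A.Infinite}) : ∃ (e : κ) (B : {B : Set ℕ // B.Infinite}),
      B.1 ⊆ Ioi (sInf A.1) ∩ f (sInf A.1) ⁻¹' {e} ∧ B.1 ⊆ A.1 := by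
    obtain ⟨e, he⟩ := (A.2.sdiff (finite_Iic (sInf A.1))).exists_infinite_inter_preimage_singleton
      (f (sInf A.1))
    exact ⟨e, ⟨_, he⟩, fun y hy => ⟨mem_Ioi.2 (not_le.1 hy.1.2), hy.2⟩, fun y hy => hy.1.1⟩
  choose e next hnext hsub using step
  let chain (n : ℕ) := next^[n] ⟨univ, infinite_univ⟩
  have chain_succ (n : ℕ) : chain (n + 1) = next (chain n) := Function.iterate_succ_apply' ..
  have chain_anti : Antitone fun n => (chain n).1 :=
    antitone_nat_of_succ_le fun n => chain_succ n ▸ hsub _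
  refine ⟨fun n => sInf (chain n).1, fun n => e (chain n), ?_⟩
  have key (m n : ℕ) (hmn : m < n) : sInf (chain n).1 ∈ Ioi (sInf (chain m).1) ∩
      f (sInf (chain m).1) ⁻¹' {e (chain m)} :=
    hnext _ (chain_succ m ▸ chain_anti hmn (Nat.sInf_mem (chain n).2.nonempty))
  exact ⟨fun m n hmn => (key m n hmn).1, fun m n hmn => (key m n hmn).2⟩

theorem exists_strictMono_monochromatic (f : ℕ → ℕ → κ) :
    ∃ (d : κ) (s : ℕ → ℕ), StrictMono s ∧ ∀ m n, m < n → f (s m) (s n) = d := by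
  obtain ⟨x, e, hx, hxe⟩ := exists_strictMono_min_homogeneous f
  obtain ⟨d, hd⟩ := Finite.exists_infinite_fiber e
  replace hd : {n | e n = d}.Infinite := infinite_coe_iff.1 hd
  refine ⟨d, x ∘ Nat.nth (e · = d), hx.comp (Nat.nth_strictMono hd), fun m n hmn => ?_⟩
  rw [Function.comp_apply, Function.comp_apply, hxe _ _ (Nat.nth_strictMono hd hmn)]
  exact Nat.nth_mem_of_infinite hd m

end Ramsey

theorem padicValNat_pow_sub_pow {p a b : ℕ} [hp : Fact p.Prime] (h : a < b) :
    padicValNat p (p ^ b - p ^ a) = a := by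
  have hsplit : p ^ b - p ^ a = p ^ a * (p ^ (b - a) - 1) := by
    rw [Nat.mul_sub_one, ← pow_add, Nat.add_sub_cancel' h.le]
  have hndvd : ¬ p ∣ p ^ (b - a) - 1 := fun hdvd =>
    hp.out.not_dvd_one <| (Nat.dvd_sub_iff_right (Nat.one_le_pow _ _ hp.out.pos)
      (dvd_pow_self p (Nat.sub_ne_zero_of_lt h))).1 hdvd
  have hpos : p ^ (b - a) - 1 ≠ 0 := by
    have := Nat.one_lt_pow (Nat.sub_ne_zero_of_lt h) hp.out.one_lt
    omega
  rw [hsplit, padicValNat.mul (pow_ne_zero _ hp.out.ne_zero) hpos, padicValNat.prime_pow,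
    padicValNat.eq_zero_of_not_dvd hndvd, add_zero]

theorem Nat.log_pow_sub_pow {p a b : ℕ} (hp : 1 < p) (h : a < b) :
    Nat.log p (p ^ b - p ^ a) = b - 1 := by
  obtain ⟨b, rfl⟩ := Nat.exists_eq_add_of_lt h
  rw [Nat.add_sub_cancel]
  have hab : p ^ a ≤ p ^ (a + b) := Nat.pow_le_pow_right (by omega) (by omega)
  have hpos : 0 < p ^ a := Nat.pow_pos (by omega)
  have hdouble : 2 * p ^ (a + b) ≤ p ^ (a + b + 1) := by
    rw [pow_succ, mul_comm]; exact Nat.mul_le_mul_left _ hp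
  exact Nat.log_eq_of_pow_le_of_lt_pow (by omega) (by omega)

theorem Finset.sum_Icc_tsub_of_monotone {f : ℕ → ℕ} (hf : Monotone f) {m n : ℕ} (h : m ≤ n) :
    ∑ i ∈ Finset.Icc m n, (f (i + 1) - f i) = f (n + 1) - f m := by
  zify [hf (h.trans n.le_succ), fun i => hf (Nat.le_succ i)]
  exact Finset.sum_Icc_sub h (fun i => (f i : ℤ))

theorem lt_of_log_lt_padicValNat {p m n : ℕ} [hp : Fact p.Prime] (hn : n ≠ 0)
    (h : Nat.log p m < padicValNat p n) : m < n :=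
  calc m < p ^ (Nat.log p m + 1) := Nat.lt_pow_succ_log_self hp.out.one_lt m
    _ ≤ p ^ padicValNat p n := Nat.pow_le_pow_right hp.out.pos h
    _ ≤ n := Nat.le_of_dvd (Nat.pos_of_ne_zero hn) pow_padicValNat_dvd

theorem Apart.strictMono {h : ℕ → ℕ} (hA : Apart h) (hpos : ∀ i, 0 < h i) : StrictMono h :=
  fun i j hij => lt_of_log_lt_padicValNat (hpos j).ne' (hA i j hij)

theorem adjacent_hindman (k : ℕ) (c : ℕ → Fin k) :
    ∃ h : ℕ → ℕ, StrictMono h ∧ (∀ i, 0 < h i) ∧ Apart h ∧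
      ∃ d : Fin k, ∀ i j, i ≤ j → c (adjSum h i j) = d := by
  obtain ⟨d, s, hs, hd⟩ := exists_strictMono_monochromatic fun i j => c (2 ^ j - 2 ^ i)
  have hpow : StrictMono fun n => 2 ^ s n := (pow_right_strictMono₀ one_lt_two).comp hs
  set h := fun n => 2 ^ s (n + 1) - 2 ^ s n
  have hpos (n : ℕ) : 0 < h n := Nat.sub_pos_of_lt (hpow (lt_add_one n))
  have hA : Apart h := fun i j hij => by
    have hle : s (i + 1) ≤ s j := hs.monotone hij
    have hlt : s i < s (i + 1) := hs (lt_add_one i)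
    rw [mu, lam, Nat.log_pow_sub_pow one_lt_two hlt,
      padicValNat_pow_sub_pow (hs (lt_add_one j))]
    omega
  refine ⟨h, hA.strictMono hpos, hpos, hA, d, fun i j hij => ?_⟩
  rw [adjSum, Finset.sum_Icc_tsub_of_monotone hpow.monotone hij]
  exact hd i (j + 1) (by omega)
end
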